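/- Let A ∈ Z^(d×n) and q ≥ 1. Every element of the Graver basis of G_q(A) = [A A ⋯ A] is either of the form (0,…,0, e_i, 0,…,0, -e_i, 0,…,0) with e_i a standard basis vector placed in two distinct blocks, or of the form (u_1, u_2, …, u_q) where u_1 + u_2 + ⋯ + u_q is a conformal sum lying in the Graver basis of A. -/

import Mathlib

/-- `u` lies in the Graver basis of `A`. -/
def InGraverBasis {m n : Type*} [Fintype m] [Fintype n] (A : Matrix m n ℤ) (u : n → ℤ) : Prop :=
  u ≠ 0 ∧ A.mulVec u = 0 ∧ ∀ v : n → ℤ, v ≠ 0 → A.mulVec v = 0 → v ≠ u →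
    ¬((∀ i, max (v i) 0 ≤ max (u i) 0) ∧ (∀ i, max (-v i) 0 ≤ max (-u i) 0))

/-- `Gq A q` is the horizontal concatenation of `q` copies of `A`. -/
def Gq {d n : ℕ} (A : Matrix (Fin d) (Fin n) ℤ) (q : ℕ) : Matrix (Fin d) (Fin q × Fin n) ℤ :=
  fun i p => A i p.2

open Matrix

/-!
Let `v` be a Graver element of `[A ⋯ A]`. If some coordinate `i` has a positive entry in block
`j` and a negative one in block `k`, then `e_(j,i) - e_(k,i)` is a kernel vector conformally
below `v`, so by minimality it is `v`. Otherwise the blocks sum conformally to `s ≠ 0`, and any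
kernel vector `t ⊑ s` of `A` lifts to a kernel vector `w ⊑ v` of `[A ⋯ A]` with block sum `t`,
obtained by splitting each coordinate `t i` greedily along the blocks; minimality of `v` forces
`w = v`, hence `t = s`.
-/

/-- The conformal order on `ℤ`: `a ⊑ b` iff `a` lies between `0` and `b`. -/
def ConformalLE (a b : ℤ) : Prop :=
  max a 0 ≤ max b 0 ∧ max (-a) 0 ≤ max (-b) 0

theorem eq_zero_of_conformalLE_zero {a : ℤ} (h : ConformalLE a 0) : a = 0 := by
  unfold ConformalLE at h; omega

theorem ConformalLE.exists_split_add {y a b : ℤ} (h : ConformalLE y (a + b)) :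
    ∃ c, ConformalLE c a ∧ ConformalLE (y - c) b := by
  -- clamp `a` to the interval between `0` and `y`
  refine ⟨min (max a (min y 0)) (max y 0), ?_, ?_⟩ <;> unfold ConformalLE at * <;> omega

theorem ConformalLE.exists_split_sum {ι : Type*} (s : Finset ι) (x : ι → ℤ)
    {y : ℤ} (hy : ConformalLE y (∑ i ∈ s, x i)) :
    ∃ z : ι → ℤ, ∑ i ∈ s, z i = y ∧ ∀ i ∈ s, ConformalLE (z i) (x i) := by
  classical
  induction s using Finset.induction_on generalizing y with
  | empty => exact ⟨0, by simpa using (eq_zero_of_conformalLE_zero hy).symm, by simp⟩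
  | insert a s ha ih =>
    rw [Finset.sum_insert ha] at hy
    obtain ⟨c, hca, hcs⟩ := hy.exists_split_add
    obtain ⟨z, hz, hzx⟩ := ih hcs
    have hzs : ∑ i ∈ s, Function.update z a c i = ∑ i ∈ s, z i :=
      Finset.sum_congr rfl fun i hi => Function.update_of_ne (ne_of_mem_of_not_mem hi ha) _ _
    refine ⟨Function.update z a c, ?_, ?_⟩
    · rw [Finset.sum_insert ha, hzs, hz, Function.update_self]; ring
    · intro i hi
      rcases Finset.mem_insert.mp hi with rfl | hi
      · simpa using hca
      · simpa [Function.update_of_ne (ne_of_mem_of_not_mem hi ha)] using hzx i hi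

theorem sum_ne_zero_of_mul_nonneg {ι : Type*} [Fintype ι] {x : ι → ℤ}
    (hx : ∀ j k, 0 ≤ x j * x k) {j₀ : ι} (hj₀ : x j₀ ≠ 0) : ∑ j, x j ≠ 0 := by
  intro h
  have : x j₀ * x j₀ ≤ (∑ j, x j) * x j₀ := by
    rw [Finset.sum_mul]
    exact Finset.single_le_sum (fun j _ => hx j j₀) (Finset.mem_univ j₀)
  rw [h, zero_mul] at this
  exact hj₀ (mul_self_eq_zero.mp (le_antisymm this (mul_self_nonneg _)))

theorem inGraverBasis_iff {m n : Type*} [Fintype m] [Fintype n] {A : Matrix m n ℤ}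
    {u : n → ℤ} :
    InGraverBasis A u ↔ u ≠ 0 ∧ A *ᵥ u = 0 ∧
      ∀ v, v ≠ 0 → A *ᵥ v = 0 → (∀ i, ConformalLE (v i) (u i)) → v = u := by
  simp only [InGraverBasis, ConformalLE, forall_and]
  exact and_congr_right' <| and_congr_right' <| forall_congr' fun v =>
    forall_congr' fun _ => forall_congr' fun _ => not_imp_not

section Gq

variable {d n q : ℕ} (A : Matrix (Fin d) (Fin n) ℤ)

theorem Gq_mulVec (w : Fin q × Fin n → ℤ) :
    Gq A q *ᵥ w = A *ᵥ fun i => ∑ j : Fin q, w (j, i) := by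
  funext x
  simp only [Matrix.mulVec, dotProduct, Gq, Fintype.sum_prod_type, Finset.mul_sum]
  rw [Finset.sum_comm]

variable {A}

theorem InGraverBasis.eq_single_sub_single {v : Fin q × Fin n → ℤ} (hv : InGraverBasis (Gq A q) v)
    {i : Fin n} {j k : Fin q} (hj : 0 < v (j, i)) (hk : v (k, i) < 0) :
    v = fun p => (if p = (j, i) then 1 else 0) - (if p = (k, i) then 1 else 0) := by
  have hjk : j ≠ k := by rintro rfl; omega
  refine ((inGraverBasis_iff.mp hv).2.2 _ (fun h => ?_) ?_ ?_).symm
  · simpa [hjk] using congrFun h (j, i)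
  · rw [Gq_mulVec]
    convert mulVec_zero A with i'
    by_cases hi : i' = i <;> simp [Finset.sum_sub_distrib, hi]
  · rintro ⟨j', i'⟩
    unfold ConformalLE
    by_cases h₁ : (j', i') = (j, i)
    · simp only [h₁, ↓reduceIte, Prod.mk.injEq, hjk, false_and]; omega
    · by_cases h₂ : (j', i') = (k, i)
      · simp only [h₂, ↓reduceIte, Prod.mk.injEq, hjk.symm, false_and]; omega
      · simp [h₁, h₂]

theorem InGraverBasis.blockSum {v : Fin q × Fin n → ℤ} (hv : InGraverBasis (Gq A q) v)
    (hs : (fun i => ∑ j : Fin q, v (j, i)) ≠ 0) :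
    InGraverBasis A fun i => ∑ j : Fin q, v (j, i) := by
  obtain ⟨-, hker, hmin⟩ := inGraverBasis_iff.mp hv
  refine inGraverBasis_iff.mpr ⟨hs, by rwa [← Gq_mulVec], fun t ht0 htker hts => ?_⟩
  choose z hz hzv using fun i =>
    ConformalLE.exists_split_sum Finset.univ (fun j => v (j, i)) (hts i)
  have hw : (fun i => ∑ j : Fin q, z i j) = t := funext fun i => hz i
  have hwv : (fun p : Fin q × Fin n => z p.2 p.1) = v := by
    refine hmin _ ?_ (by rw [Gq_mulVec, hw, htker]) fun p => hzv p.2 p.1 (Finset.mem_univ _)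
    intro h
    apply ht0
    rw [← hw]
    funext i
    exact Finset.sum_eq_zero fun j _ => congrFun h (j, i)
  rw [← hw]
  funext i
  exact Finset.sum_congr rfl fun j _ => congrFun hwv (j, i)

end Gq

/-- Every Graver basis element of `G_q(A) = [A A ⋯ A]` is either a difference of the same
standard basis vector placed in two distinct blocks, or a tuple `(u_1, …, u_q)` whose blocks
sum conformally (no cancellation in any coordinate) to a Graver basis element of `A`. -/
theorem stmt10 {d n q : ℕ} (A : Matrix (Fin d) (Fin n) ℤ)
    (v : Fin q × Fin n → ℤ) (hv : InGraverBasis (Gq A q) v) :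
    (∃ (i : Fin n) (j k : Fin q), j ≠ k ∧
      v = fun p => (if p = (j, i) then 1 else 0) - (if p = (k, i) then 1 else 0)) ∨
    ((∀ (i : Fin n) (j k : Fin q), 0 ≤ v (j, i) * v (k, i)) ∧
      InGraverBasis A fun i => ∑ j : Fin q, v (j, i)) := by
  by_cases hconf : ∀ (i : Fin n) (j k : Fin q), 0 ≤ v (j, i) * v (k, i)
  · refine Or.inr ⟨hconf, hv.blockSum fun h => ?_⟩
    obtain ⟨⟨j₀, i₀⟩, hv₀⟩ := Function.ne_iff.mp hv.1
    exact sum_ne_zero_of_mul_nonneg (hconf i₀) hv₀ (congrFun h i₀)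
  · push Not at hconf
    obtain ⟨i, j, k, hjk⟩ := hconf
    left
    rcases mul_neg_iff.mp hjk with ⟨hj, hk⟩ | ⟨hj, hk⟩
    · exact ⟨i, j, k, by rintro rfl; omega, hv.eq_single_sub_single hj hk⟩
    · exact ⟨i, k, j, by rintro rfl; omega, hv.eq_single_sub_single hk hj⟩
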